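/- Let $V$ be a countable set and $G=(V,E)$ a connected graph. Let $w: V \to \mathbb{R}^+$ satisfy $\sum_{x \in V} w_x = 1$. For all distinct $x,y \in V$ fix a path $\gamma_{xy}=\gamma_{yx}$ of length $m_{xy}$ joining $x$ and $y$, and define $\bar{w}: V \to \mathbb{R}^+$ by $\bar{w}_z := \sum_{\{x,y\}: z \in \gamma_{xy}} m_{xy} w_x w_y$. Then for every $u: V \to \mathbb{C}$ with $\sum_{x\in V} w_x u_x = 0$ one has $\sum_{x \in V} w_x |u_x|^2 \leq \sum_{z \in V} \bar{w}_z |\nabla u|_z^2$, where $|\nabla u|_z^2 := \sum_{y: \{z,y\} \in E} |u_z - u_y|^2$. -/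

import Mathlib

/-!
Expanding the square and using the zero mean, `∑_{x,y} w_x w_y |u_x - u_y|² = 2 ∑_x w_x |u_x|²`.
Along `γ_xy` the triangle inequality bounds `|u_x - u_y|` by `∑_z |∇u|_z` over the distinct
vertices `z` of the path (from a repeated vertex, jump straight to its last visit), and
Cauchy–Schwarz over these at most `m_xy` vertices bounds `|u_x - u_y|²` by `m_xy ∑_z |∇u|_z²`.
Exchanging the order of summation turns the weighted sum of these bounds into
`2 ∑_z w̄_z |∇u|_z²`.
-/

open Finset

theorem dist_le_sum_image_of_dist_succ_le {V α : Type*} [DecidableEq V] [PseudoMetricSpace α]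
    (u : V → α) {s : V → ℝ} (hs : ∀ z, 0 ≤ s z) (n : ℕ) (f : ℕ → V)
    (hf : ∀ i < n, dist (u (f i)) (u (f (i + 1))) ≤ s (f i)) :
    dist (u (f 0)) (u (f n)) ≤ ∑ z ∈ (range n).image f, s z := by
  induction n using Nat.strong_induction_on generalizing f with
  | _ n ih =>
  rcases n with _ | n
  · simp
  obtain ⟨j, hjn, hj, hlast⟩ : ∃ j ≤ n, f j = f 0 ∧ ∀ k, j < k → k ≤ n → f k ≠ f 0 :=
    ⟨_, Nat.findGreatest_le n, Nat.findGreatest_spec (P := fun i => f i = f 0) (Nat.zero_le n) rfl,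
      fun _ => Nat.findGreatest_is_greatest⟩
  set tail : Finset V := (range (n - j)).image fun k => f (j + 1 + k)
  have htail := ih (n - j) (by omega) (fun k => f (j + 1 + k))
    (fun k hk => by simpa only [add_assoc] using hf (j + 1 + k) (by omega))
  have hend : j + 1 + (n - j) = n + 1 := by omega
  simp only [add_zero, hend] at htail
  have hnotMem : f 0 ∉ tail := by
    simp only [tail, mem_image, mem_range, not_exists, not_and]
    exact fun k hk => hlast _ (by omega) (by omega)
  have hsub : insert (f 0) tail ⊆ (range (n + 1)).image f := by
    refine insert_subset_iff.mpr ⟨mem_image_of_mem f (by simp), image_subset_iff.mpr fun k hk => ?_⟩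
    exact mem_image_of_mem f (mem_range.mpr (by have := mem_range.mp hk; omega))
  calc dist (u (f 0)) (u (f (n + 1)))
      ≤ dist (u (f j)) (u (f (j + 1))) + dist (u (f (j + 1))) (u (f (n + 1))) := by
        rw [hj]; exact dist_triangle _ _ _
    _ ≤ s (f 0) + ∑ z ∈ tail, s z := by
        gcongr
        exact hj ▸ hf j (by omega)
    _ = ∑ z ∈ insert (f 0) tail, s z := (sum_insert hnotMem).symm
    _ ≤ ∑ z ∈ (range (n + 1)).image f, s z :=
        sum_le_sum_of_subset_of_nonneg hsub fun z _ _ => hs z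

theorem norm_sub_sq_le_mul_sum_image {V F : Type*} [DecidableEq V] [SeminormedAddCommGroup F]
    (u : V → F) {g : V → ℝ} (hg : ∀ z, 0 ≤ g z) (n : ℕ) (f : ℕ → V)
    (hf : ∀ i < n, ‖u (f i) - u (f (i + 1))‖ ^ 2 ≤ g (f i)) :
    ‖u (f 0) - u (f n)‖ ^ 2 ≤ n * ∑ z ∈ (range n).image f, g z := by
  have hdist := dist_le_sum_image_of_dist_succ_le u (s := fun z => √(g z))
    (fun _ => Real.sqrt_nonneg _) n f fun i hi => by
      rw [dist_eq_norm]
      exact (Real.le_sqrt (norm_nonneg _) (hg _)).mpr (hf i hi)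
  have hcard : ((range n).image f).card ≤ n := card_image_le.trans (card_range n).le
  calc ‖u (f 0) - u (f n)‖ ^ 2
      ≤ (∑ z ∈ (range n).image f, √(g z)) ^ 2 := by
        rw [← dist_eq_norm]; gcongr
    _ ≤ ((range n).image f).card * ∑ z ∈ (range n).image f, √(g z) ^ 2 :=
        sq_sum_le_card_mul_sum_sq
    _ ≤ n * ∑ z ∈ (range n).image f, g z := by
        simp only [Real.sq_sqrt (hg _)]
        gcongr
        exact sum_nonneg fun z _ => hg z

theorem norm_sub_sq_le_mul_sum_path {V F : Type*} [DecidableEq V] [SeminormedAddCommGroup F]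
    {E : V → V → Prop} (u : V → F) {g : V → ℝ} (hg : ∀ z, 0 ≤ g z)
    (hstep : ∀ a b, E a b → ‖u a - u b‖ ^ 2 ≤ g a) {x y : V} {n : ℕ} {γ : ℕ → V}
    (h0 : γ 0 = x) (hn : γ n = y) (hγ : ∀ i < n, E (γ i) (γ (i + 1))) :
    ‖u x - u y‖ ^ 2 ≤ n * ∑ z ∈ (Iic n).image γ, g z := by
  subst h0 hn
  calc ‖u (γ 0) - u (γ n)‖ ^ 2 ≤ n * ∑ z ∈ (range n).image γ, g z :=
        norm_sub_sq_le_mul_sum_image u hg n γ fun i hi => hstep _ _ (hγ i hi)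
    _ ≤ n * ∑ z ∈ (Iic n).image γ, g z := by
        gcongr
        · exact fun z _ _ => hg z
        · exact fun i hi => mem_Iic.mpr (mem_range.mp hi).le

theorem hasSum_mul_mul_norm_sub_sq {V F : Type*} [NormedAddCommGroup F] [InnerProductSpace ℝ F]
    {w : V → ℝ} {u : V → F} (hw : ∀ x, 0 ≤ w x) (hw1 : HasSum w 1)
    (hmean : HasSum (fun x => w x • u x) 0) (hQ : Summable fun x => w x * ‖u x‖ ^ 2) :
    HasSum (fun p : V × V => w p.1 * w p.2 * ‖u p.1 - u p.2‖ ^ 2)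
      (2 * ∑' x, w x * ‖u x‖ ^ 2) := by
  set Q := ∑' x, w x * ‖u x‖ ^ 2
  have hfiber : ∀ x,
      HasSum (fun y => w x * w y * ‖u x - u y‖ ^ 2) (w x * ‖u x‖ ^ 2 + w x * Q) := by
    intro x
    have hcross : HasSum (fun y => w y * inner ℝ (u x) (u y)) 0 := by
      simpa [real_inner_smul_right] using hmean.mapL (innerSL ℝ (u x))
    have h := (((hw1.mul_left (‖u x‖ ^ 2)).sub (hcross.mul_left 2)).add hQ.hasSum).mul_left (w x)
    rw [show w x * (‖u x‖ ^ 2 * 1 - 2 * 0 + Q) = w x * ‖u x‖ ^ 2 + w x * Q by ring] at h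
    refine h.congr_fun fun y => ?_
    rw [norm_sub_sq_real]; ring
  have hrows : HasSum (fun x => w x * ‖u x‖ ^ 2 + w x * Q) (2 * Q) := by
    convert hQ.hasSum.add (hw1.mul_right Q) using 1; ring
  have hsumm : Summable fun p : V × V => w p.1 * w p.2 * ‖u p.1 - u p.2‖ ^ 2 :=
    (summable_prod_of_nonneg fun p => mul_nonneg (mul_nonneg (hw _) (hw _)) (sq_nonneg _)).mpr
      ⟨fun x => (hfiber x).summable, hrows.summable.congr fun x => (hfiber x).tsum_eq.symm⟩
  exact (hsumm.hasSum.prod_fiberwise hfiber).unique hrows ▸ hsumm.hasSum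

theorem hasSum_tsum_swap_of_nonneg {α β : Type*} {K : α → β → ℝ} (hK : ∀ a b, 0 ≤ K a b)
    (hrow : ∀ a, Summable (K a)) (hsum : Summable fun a => ∑' b, K a b) :
    HasSum (fun b => ∑' a, K a b) (∑' a, ∑' b, K a b) := by
  have h : Summable (Function.uncurry K) :=
    (summable_prod_of_nonneg fun p => hK p.1 p.2).mpr ⟨hrow, hsum⟩
  obtain ⟨hcol, hsum'⟩ := (summable_prod_of_nonneg fun q => hK q.2 q.1).mp h.prod_symm
  exact h.tsum_comm' hrow hcol ▸ hsum'.hasSum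

noncomputable def pathLoad {V : Type*} (m : V → V → ℕ) (γ : V → V → ℕ → V) (w : V → ℝ)
    (z : V) (p : V × V) : ℝ :=
  Set.indicator {p : V × V | p.1 ≠ p.2 ∧ z ∈ γ p.1 p.2 '' Set.Iic (m p.1 p.2)}
    (fun p => (m p.1 p.2 : ℝ) * w p.1 * w p.2) p

theorem pathLoad_nonneg {V : Type*} {m : V → V → ℕ} {γ : V → V → ℕ → V} {w : V → ℝ}
    (hw : ∀ x, 0 ≤ w x) (z : V) (p : V × V) : 0 ≤ pathLoad m γ w z p :=
  Set.indicator_nonneg (fun _ _ => mul_nonneg (mul_nonneg (Nat.cast_nonneg _) (hw _)) (hw _)) _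

theorem mul_norm_sub_sq_le_tsum_pathLoad {V F : Type*} [SeminormedAddCommGroup F]
    {E : V → V → Prop} {m : V → V → ℕ} {γ : V → V → ℕ → V} {w : V → ℝ} (hw : ∀ x, 0 ≤ w x)
    (hγ0 : ∀ x y, x ≠ y → γ x y 0 = x) (hγend : ∀ x y, x ≠ y → γ x y (m x y) = y)
    (hγE : ∀ x y, x ≠ y → ∀ i < m x y, E (γ x y i) (γ x y (i + 1)))
    (u : V → F) {g : V → ℝ} (hg : ∀ z, 0 ≤ g z) (hstep : ∀ a b, E a b → ‖u a - u b‖ ^ 2 ≤ g a)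
    (p : V × V) :
    w p.1 * w p.2 * ‖u p.1 - u p.2‖ ^ 2 ≤ ∑' z, pathLoad m γ w z p * g z := by
  classical
  obtain ⟨x, y⟩ := p
  rcases eq_or_ne x y with rfl | hxy
  · simpa using tsum_nonneg fun z => mul_nonneg (pathLoad_nonneg hw z (x, x)) (hg z)
  have heval : ∑' z, pathLoad m γ w z (x, y) * g z
      = m x y * w x * w y * ∑ z ∈ (Iic (m x y)).image (γ x y), g z := by
    rw [mul_sum, tsum_eq_sum (s := (Iic (m x y)).image (γ x y))]
    all_goals simp only [pathLoad, Set.indicator_apply, Set.mem_ofPred_eq, ne_eq, hxy,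
      not_false_eq_true, true_and]
    · exact sum_congr rfl fun z hz => by rw [if_pos (by simpa using hz)]
    · exact fun z hz => by rw [if_neg (by simpa using hz), zero_mul]
  calc w x * w y * ‖u x - u y‖ ^ 2
      ≤ w x * w y * (m x y * ∑ z ∈ (Iic (m x y)).image (γ x y), g z) := by
        gcongr
        · exact mul_nonneg (hw x) (hw y)
        · exact norm_sub_sq_le_mul_sum_path u hg hstep (hγ0 x y hxy) (hγend x y hxy) (hγE x y hxy)
    _ = ∑' z, pathLoad m γ w z (x, y) * g z := by rw [heval]; ring

theorem stmt_0_general {V : Type*}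
    (E : V → V → Prop)
    (w : V → ℝ) (hwpos : ∀ x, 0 < w x) (hwsumm : Summable w) (hw1 : ∑' x, w x = 1)
    (m : V → V → ℕ) (γ : V → V → ℕ → V)
    (hγ0 : ∀ x y, x ≠ y → γ x y 0 = x)
    (hγend : ∀ x y, x ≠ y → γ x y (m x y) = y)
    (hγE : ∀ x y, x ≠ y → ∀ i < m x y, E (γ x y i) (γ x y (i + 1)))
    (u : V → ℂ)
    (gradsq : V → ℝ)
    (hgrad : ∀ z, gradsq z = ∑' y, Set.indicator {y | E z y} (fun y => ‖u z - u y‖ ^ 2) y)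
    (hgradsumm : ∀ z, Summable (fun y =>
      Set.indicator {y | E z y} (fun y => ‖u z - u y‖ ^ 2) y))
    (barw : V → ℝ)
    (hbarw : ∀ z, barw z = (1 / 2) * ∑' p : V × V,
      Set.indicator {p : V × V | p.1 ≠ p.2 ∧ z ∈ γ p.1 p.2 '' Set.Iic (m p.1 p.2)}
        (fun p => (m p.1 p.2 : ℝ) * w p.1 * w p.2) p)
    (hbarwsumm : ∀ z, Summable (fun p : V × V =>
      Set.indicator {p : V × V | p.1 ≠ p.2 ∧ z ∈ γ p.1 p.2 '' Set.Iic (m p.1 p.2)}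
        (fun p => (m p.1 p.2 : ℝ) * w p.1 * w p.2) p))
    (husumm : Summable (fun x => (w x : ℂ) * u x))
    (hmean : ∑' x, (w x : ℂ) * u x = 0)
    (hlhs : Summable (fun x => w x * ‖u x‖ ^ 2))
    (hrhs : Summable (fun z => barw z * gradsq z)) :
    ∑' x, w x * ‖u x‖ ^ 2 ≤ ∑' z, barw z * gradsq z := by
  have hw : ∀ x, 0 ≤ w x := fun x => (hwpos x).le
  have hindicator_nonneg : ∀ z y, 0 ≤ Set.indicator {y | E z y} (fun y => ‖u z - u y‖ ^ 2) y :=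
    fun _ _ => Set.indicator_nonneg (fun _ _ => sq_nonneg _) _
  have hgradnn : ∀ z, 0 ≤ gradsq z := fun z => hgrad z ▸ tsum_nonneg (hindicator_nonneg z)
  have hstep : ∀ a b, E a b → ‖u a - u b‖ ^ 2 ≤ gradsq a := fun a b hab => by
    simpa [hgrad a, Set.indicator_of_mem (show b ∈ {y | E a y} from hab)] using
      (hgradsumm a).le_tsum b fun y _ => hindicator_nonneg a y
  have hrow : ∀ z, ∑' p, pathLoad m γ w z p * gradsq z = 2 * (barw z * gradsq z) := fun z => by
    rw [tsum_mul_right, hbarw z]; unfold pathLoad; ring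
  have hRHS := hasSum_tsum_swap_of_nonneg
    (fun z p => mul_nonneg (pathLoad_nonneg hw z p) (hgradnn z))
    (fun z => (hbarwsumm z).mul_right _) ((hrhs.mul_left 2).congr fun z => (hrow z).symm)
  rw [tsum_congr hrow, tsum_mul_left] at hRHS
  have hLHS := hasSum_mul_mul_norm_sub_sq (F := ℂ) hw (hw1 ▸ hwsumm.hasSum)
    (by simpa [Complex.real_smul, hmean] using husumm.hasSum) hlhs
  have hpair := mul_norm_sub_sq_le_tsum_pathLoad hw hγ0 hγend hγE u hgradnn hstep
  linarith [hasSum_le hpair hLHS hRHS]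

/-- Discrete Poincaré inequality on a connected graph (Lemma `disc` in the paper).
Connectedness is encoded by the given system of paths joining any two distinct vertices. -/
theorem stmt_0 {V : Type*} [Countable V]
    (E : V → V → Prop) (hEsymm : ∀ x y, E x y → E y x)
    (w : V → ℝ) (hwpos : ∀ x, 0 < w x) (hwsumm : Summable w) (hw1 : ∑' x, w x = 1)
    (m : V → V → ℕ) (γ : V → V → ℕ → V)
    (hmsym : ∀ x y, m x y = m y x)
    (hγ0 : ∀ x y, x ≠ y → γ x y 0 = x)
    (hγend : ∀ x y, x ≠ y → γ x y (m x y) = y)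
    (hγE : ∀ x y, x ≠ y → ∀ i < m x y, E (γ x y i) (γ x y (i + 1)))
    (hγsym : ∀ x y, γ x y '' Set.Iic (m x y) = γ y x '' Set.Iic (m y x))
    (u : V → ℂ)
    (gradsq : V → ℝ)
    (hgrad : ∀ z, gradsq z = ∑' y, Set.indicator {y | E z y} (fun y => ‖u z - u y‖ ^ 2) y)
    (hgradsumm : ∀ z, Summable (fun y =>
      Set.indicator {y | E z y} (fun y => ‖u z - u y‖ ^ 2) y))
    (barw : V → ℝ)
    (hbarw : ∀ z, barw z = (1 / 2) * ∑' p : V × V,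
      Set.indicator {p : V × V | p.1 ≠ p.2 ∧ z ∈ γ p.1 p.2 '' Set.Iic (m p.1 p.2)}
        (fun p => (m p.1 p.2 : ℝ) * w p.1 * w p.2) p)
    (hbarwsumm : ∀ z, Summable (fun p : V × V =>
      Set.indicator {p : V × V | p.1 ≠ p.2 ∧ z ∈ γ p.1 p.2 '' Set.Iic (m p.1 p.2)}
        (fun p => (m p.1 p.2 : ℝ) * w p.1 * w p.2) p))
    (husumm : Summable (fun x => (w x : ℂ) * u x))
    (hmean : ∑' x, (w x : ℂ) * u x = 0)
    (hlhs : Summable (fun x => w x * ‖u x‖ ^ 2))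
    (hrhs : Summable (fun z => barw z * gradsq z)) :
    ∑' x, w x * ‖u x‖ ^ 2 ≤ ∑' z, barw z * gradsq z :=
  stmt_0_general E w hwpos hwsumm hw1 m γ hγ0 hγend hγE u gradsq hgrad hgradsumm barw hbarw
    hbarwsumm husumm hmean hlhs hrhs
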